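/- arXiv:2410.00992 — 4 statements merged into one kernel-verified Lean document; each statement's English description precedes it below -/
import Mathlib

section
/- Let ℋ be a set with at least 3 elements and a distinguished element 𝟘. Define hyperaddition on ℋ by: 𝟘 ⊞ s = s ⊞ 𝟘 = {s}; for nonzero s, s ⊞ s = ℋ \ {s}; and for distinct nonzero s ≠ s', s ⊞ s' = {s, s'}. Then (ℋ, ⊞, 𝟘) is a hypergroup in which every element is its own unique hypernegative (i.e., −s = s), the operation is associative, and reversibility holds: a₃ ∈ a₁ ⊞ a₂ iff a₂ ∈ a₃ ⊞ (−a₁). -/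
/-- Elementwise extension of a hyperoperation to subsets. -/
def setAdd {H : Type} (hadd : H → H → Set H) (S₁ S₂ : Set H) : Set H :=
  ⋃ s₁ ∈ S₁, ⋃ s₂ ∈ S₂, hadd s₁ s₂

open Classical in
/-- Hyperaddition: `z ⊞ s = s ⊞ z = {s}`; `s ⊞ s = H \ {s}` for nonzero `s`;
`s ⊞ s' = {s, s'}` for distinct nonzero `s ≠ s'`. -/
noncomputable def hadd5 {H : Type} (z : H) : H → H → Set H := fun s t =>
  if s = z then {t}
  else if t = z then {s}
  else if s = t then {x | x ≠ s}
  else {s, t}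

variable {H : Type} (z : H)

open Classical in
lemma mem_hadd5 {a b x : H} : x ∈ hadd5 z a b ↔
    (if a = z then x = b else if b = z then x = a
     else if a = b then x ≠ a else (x = a ∨ x = b)) := by
  classical
  simp only [hadd5]
  split_ifs <;> exact Iff.rfl

lemma hadd5_zl (b : H) : hadd5 z z b = {b} := by simp [hadd5]

lemma hadd5_zr (a : H) : hadd5 z a z = {a} := by
  ext x; rw [mem_hadd5]; split_ifs with h <;> simp_all

lemma hadd5_self {a : H} (ha : a ≠ z) : hadd5 z a a = {x | x ≠ a} := by
  ext x; rw [mem_hadd5]; simp [ha]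

lemma hadd5_ne' {a b : H} (ha : a ≠ z) (hb : b ≠ z) (hab : a ≠ b) :
    hadd5 z a b = {a, b} := by
  ext x; rw [mem_hadd5]; simp [ha, hb, hab]

lemma mem_setAdd {hadd : H → H → Set H} {S₁ S₂ : Set H} {x : H} :
    x ∈ setAdd hadd S₁ S₂ ↔ ∃ s₁ ∈ S₁, ∃ s₂ ∈ S₂, x ∈ hadd s₁ s₂ := by
  simp [setAdd]

lemma exists_third (h3 : ∃ a b c : H, a ≠ b ∧ b ≠ c ∧ a ≠ c) (u v : H) :
    ∃ t : H, t ≠ u ∧ t ≠ v := by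
  classical
  rcases h3 with ⟨p, q, r, hpq, hqr, hpr⟩
  by_cases hp : p ≠ u ∧ p ≠ v
  · exact ⟨p, hp⟩
  · by_cases hq : q ≠ u ∧ q ≠ v
    · exact ⟨q, hq⟩
    · rw [not_and_or, not_not, not_not] at hp hq
      refine ⟨r, ?_, ?_⟩ <;>
        rcases hp with rfl | rfl <;> rcases hq with rfl | rfl <;> simp_all <;>
        first
        | exact fun h => hqr h.symm
        | exact fun h => hpr h.symm
        | tauto

lemma assoc5 (h3 : ∃ a b c : H, a ≠ b ∧ b ≠ c ∧ a ≠ c) (a b c : H) :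
    setAdd (hadd5 z) (hadd5 z a b) {c} = setAdd (hadd5 z) {a} (hadd5 z b c) := by
  classical
  ext x
  simp only [mem_setAdd, Set.mem_singleton_iff, exists_eq_left]
  by_cases ha : a = z
  · subst ha; simp [hadd5_zl]
  · by_cases hb : b = z
    · subst hb; simp [hadd5_zl, hadd5_zr]
    · by_cases hc : c = z
      · subst hc; simp [hadd5_zl, hadd5_zr]
      · by_cases hab : a = b
        · subst hab
          by_cases hac : a = c
          · subst hac
            -- a = b = c nonzero: both sides = {x ≠ z}
            rw [hadd5_self z ha]
            have key : ∀ y, (∃ s ∈ {x : H | x ≠ a}, y ∈ hadd5 z s a) ↔ y ≠ z := by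
              intro y
              constructor
              · rintro ⟨s, hs, hx⟩
                simp only [Set.mem_setOf_eq] at hs
                rw [mem_hadd5] at hx
                split_ifs at hx <;>
                  first
                  | (rcases hx with rfl | rfl <;> simp_all)
                  | simp_all
              · intro hy
                by_cases hya : y = a
                · exact ⟨z, fun h => ha h.symm, by rw [hadd5_zl]; simp [hya]⟩
                · exact ⟨y, hya, by rw [hadd5_ne' z hy ha hya]; exact Or.inl rfl⟩
            rw [key x]
            constructor
            · intro hx
              by_cases hxa : x = a
              · obtain ⟨t, hta, htz⟩ := exists_third h3 a z
                exact ⟨t, hta, by rw [hadd5_ne' z ha htz (Ne.symm hta)]; exact Or.inl hxa⟩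
              · exact ⟨x, hxa, by rw [hadd5_ne' z ha hx (Ne.symm hxa)]; exact Or.inr rfl⟩
            · rintro ⟨t, ht, hx⟩
              simp only [Set.mem_setOf_eq] at ht
              rw [mem_hadd5] at hx
              split_ifs at hx <;>
                first
                | (rcases hx with rfl | rfl <;> simp_all)
                | simp_all
          · -- a = b ≠ c, all nonzero: both sides univ
            rw [hadd5_self z ha, hadd5_ne' z ha hc hac]
            constructor
            · rintro -
              by_cases hxa : x = a
              · exact ⟨c, Or.inr rfl, by rw [hadd5_ne' z ha hc hac]; exact Or.inl hxa⟩
              · exact ⟨a, Or.inl rfl, by rw [hadd5_self z ha]; exact hxa⟩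
            · rintro -
              by_cases hxc : x = c
              · exact ⟨z, fun h => ha h.symm, by rw [hadd5_zl]; simp [hxc]⟩
              · exact ⟨c, fun h => hac h.symm, by rw [hadd5_self z hc]; exact hxc⟩
        · by_cases hbc : b = c
          · subst hbc
            -- a ≠ b = c, all nonzero: both sides univ
            rw [hadd5_ne' z ha hb hab, hadd5_self z hb]
            constructor
            · rintro -
              by_cases hxa : x = a
              · exact ⟨z, fun h => hb h.symm, by rw [hadd5_zr]; simp [hxa]⟩
              · exact ⟨a, hab, by rw [hadd5_self z ha]; exact hxa⟩
            · rintro -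
              by_cases hxb : x = b
              · exact ⟨a, Or.inl rfl, by rw [hadd5_ne' z ha hb hab]; exact Or.inr hxb⟩
              · exact ⟨b, Or.inr rfl, by rw [hadd5_self z hb]; exact hxb⟩
          · by_cases hac : a = c
            · subst hac
              -- a = c ≠ b, all nonzero: both sides univ
              rw [hadd5_ne' z ha hb hab, hadd5_ne' z hb ha (Ne.symm hab)]
              constructor
              · rintro -
                by_cases hxa : x = a
                · refine ⟨b, Or.inl rfl, ?_⟩
                  rw [hadd5_ne' z ha hb hab]
                  left; exact hxa
                · exact ⟨a, Or.inr rfl, by rw [hadd5_self z ha]; exact hxa⟩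
              · rintro -
                by_cases hxa : x = a
                · refine ⟨b, Or.inr rfl, ?_⟩
                  rw [hadd5_ne' z hb ha (Ne.symm hab)]
                  right; exact hxa
                · exact ⟨a, Or.inl rfl, by rw [hadd5_self z ha]; exact hxa⟩
            · -- all distinct nonzero: both sides {a, b, c}
              rw [hadd5_ne' z ha hb hab, hadd5_ne' z hb hc hbc]
              constructor
              · rintro ⟨s, hs, hx⟩
                simp only [Set.mem_insert_iff, Set.mem_singleton_iff] at hs
                rcases hs with hs | hs <;> rw [hs] at hx
                · rw [hadd5_ne' z ha hc hac] at hx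
                  obtain hx | hx := Set.mem_insert_iff.mp hx
                  · exact ⟨b, Or.inl rfl, by rw [hadd5_ne' z ha hb hab]; exact Or.inl hx⟩
                  · exact ⟨c, Or.inr rfl, by rw [hadd5_ne' z ha hc hac]; exact Or.inr hx⟩
                · rw [hadd5_ne' z hb hc hbc] at hx
                  obtain hx | hx := Set.mem_insert_iff.mp hx
                  · exact ⟨b, Or.inl rfl, by rw [hadd5_ne' z ha hb hab]; exact Or.inr hx⟩
                  · exact ⟨c, Or.inr rfl, by rw [hadd5_ne' z ha hc hac]; exact Or.inr hx⟩
              · rintro ⟨t, ht, hx⟩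
                simp only [Set.mem_insert_iff, Set.mem_singleton_iff] at ht
                rcases ht with ht | ht <;> rw [ht] at hx
                · rw [hadd5_ne' z ha hb hab] at hx
                  obtain hx | hx := Set.mem_insert_iff.mp hx
                  · exact ⟨a, Or.inl rfl, by rw [hadd5_ne' z ha hc hac]; exact Or.inl hx⟩
                  · exact ⟨b, Or.inr rfl, by rw [hadd5_ne' z hb hc hbc]; exact Or.inl hx⟩
                · rw [hadd5_ne' z ha hc hac] at hx
                  obtain hx | hx := Set.mem_insert_iff.mp hx
                  · exact ⟨a, Or.inl rfl, by rw [hadd5_ne' z ha hc hac]; exact Or.inl hx⟩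
                  · exact ⟨a, Or.inl rfl, by rw [hadd5_ne' z ha hc hac]; exact Or.inr hx⟩

/-- If `H` has at least 3 elements, then `(H, ⊞, z)` with the above
hyperaddition is a hypergroup in which every element is its own unique hypernegative:
`z` is a hyperzero, `⊞` is associative, `z ∈ s ⊞ s` for all `s`, hypernegatives are
unique (`−s = s`), and reversibility holds: `a₃ ∈ a₁ ⊞ a₂ ↔ a₂ ∈ a₃ ⊞ (−a₁)`. -/
theorem massouros_hypergroup {H : Type} (z : H)
    (h3 : ∃ a b c : H, a ≠ b ∧ b ≠ c ∧ a ≠ c) :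
    (∀ a : H, hadd5 z z a = {a} ∧ hadd5 z a z = {a}) ∧
    (∀ a b c : H, setAdd (hadd5 z) (hadd5 z a b) {c} = setAdd (hadd5 z) {a} (hadd5 z b c)) ∧
    (∀ a : H, z ∈ hadd5 z a a) ∧
    (∀ a b : H, z ∈ hadd5 z a b → b = a) ∧
    (∀ a₁ a₂ a₃ : H, a₃ ∈ hadd5 z a₁ a₂ ↔ a₂ ∈ hadd5 z a₃ a₁) := by
  classical
  refine ⟨fun a => ⟨hadd5_zl z a, hadd5_zr z a⟩, assoc5 z h3, ?_, ?_, ?_⟩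
  · intro a
    rw [mem_hadd5]
    split_ifs <;> simp_all [eq_comm]
  · intro a b h
    rw [mem_hadd5] at h
    split_ifs at h <;>
      first
      | (rcases h with rfl | rfl <;> simp_all)
      | simp_all
  · intro a₁ a₂ a₃
    rw [mem_hadd5, mem_hadd5]
    split_ifs <;> simp_all <;> tauto
end

section
/- Let M be a module over a commutative ring C and let G be a subgroup of the multiplicative monoid of C. Suppose M has a surpassing pre-order ⪯ (preserved by addition and by scalar multiplication). Define on the set of orbits M/G the relation b₁G ⪯ b₂G if for each g ∈ G there exists g' ∈ G with b₁g ⪯ b₂g'. Then this relation is preserved by the hyperaddition of the residue hypermodule: if b₁G ⪯ b₁'G and b₂G ⪯ b₂'G, then every element of b₁G + b₂G is ⪯ some element of b₁'G + b₂'G. -/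
/-- Let `M` be a module over a commutative ring `C` and `G` a subgroup of
the multiplicative monoid of `C` (a submonoid all of whose elements are invertible in
`G`).  Suppose `M` has a surpassing pre-order `le` preserved by addition and by scalar
multiplication.  The orbit relation `b₁G ⪯ b₂G` (for each `g ∈ G` there is `g' ∈ G` with
`g•b₁ ⪯ g'•b₂`) is preserved by the hyperaddition of the residue hypermodule: if
`b₁G ⪯ b₁'G` and `b₂G ⪯ b₂'G`, then every element of `b₁G + b₂G` is `⪯` some element of
`b₁'G + b₂'G`. -/
theorem residue_surpassing_add {C M : Type} [CommRing C] [AddCommMonoid M] [Module C M]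
    (G : Submonoid C)
    (hG : ∀ g ∈ G, ∃ g' ∈ G, g * g' = 1)
    (le : M → M → Prop)
    (hrefl : ∀ b, le b b)
    (htrans : ∀ a b c, le a b → le b c → le a c)
    (haddle : ∀ b₁ b₂ b₁' b₂', le b₁ b₁' → le b₂ b₂' → le (b₁ + b₂) (b₁' + b₂'))
    (hsmul : ∀ (c : C) (b b' : M), le b b' → le (c • b) (c • b'))
    (b₁ b₂ b₁' b₂' : M)
    (h₁ : ∀ g ∈ G, ∃ g' ∈ G, le (g • b₁) (g' • b₁'))
    (h₂ : ∀ g ∈ G, ∃ g' ∈ G, le (g • b₂) (g' • b₂')) :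
    ∀ g₁ ∈ G, ∀ g₂ ∈ G, ∃ g₁' ∈ G, ∃ g₂' ∈ G,
      le (g₁ • b₁ + g₂ • b₂) (g₁' • b₁' + g₂' • b₂') := by
  intro g₁ hg₁ g₂ hg₂
  obtain ⟨g₁', hg₁', h1⟩ := h₁ g₁ hg₁
  obtain ⟨g₂', hg₂', h2⟩ := h₂ g₂ hg₂
  exact ⟨g₁', hg₁', g₂', hg₂', haddle _ _ _ _ h1 h2⟩
end

section
/- Let M be a free 𝒯-module over a monoid 𝒯 with base ℬ, and let G be a subgroup of 𝒯 such that ℬ is G-invariant (as a set of G-orbit representatives, i.e., the G-orbits of base elements are distinct). Then the residue hypermodule M/G is free over 𝒯/G with base {bG : b ∈ ℬ}: every element of M/G is uniquely a sum ∑ (aᵢG)(bᵢG) with aᵢG ∈ (𝒯/G) ∪ {0}. -/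
/-! Acting by `h ∈ T` on `∑ aᵢ bᵢ` gives `∑ (h aᵢ) bᵢ`. So if `g • ∑ aᵢ bᵢ = g' • ∑ a'ᵢ bᵢ`
with `g, g' ∈ G`, then `∑ a'ᵢ bᵢ = (g'⁻¹ g) • ∑ aᵢ bᵢ = ∑ (g'⁻¹ g aᵢ) bᵢ`, and uniqueness of
coefficients in the free module gives `a'ᵢ = g'⁻¹ g aᵢ` for every `i`;
since `T ∪ {𝟘}` has no zero divisors, the supports agree. -/

open Classical in
/-- Action of a coefficient in `T ∪ {𝟘}` (modelled as `WithZero T`) on a module `N`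
with zero, via the `T`-action `σ`. -/
noncomputable def wact {T N : Type} [Zero N] (σ : T → N → N) (a : WithZero T) (v : N) : N :=
  if h : a = 0 then 0 else σ (WithZero.unzero h) v

section WAct

variable {T N : Type}

@[simp]
theorem wact_zero [Zero N] (σ : T → N → N) (v : N) : wact σ 0 v = 0 := by
  simp [wact]

@[simp]
theorem wact_coe [Zero N] (σ : T → N → N) (t : T) (v : N) : wact σ t v = σ t v := by
  simp [wact]

theorem apply_wact [Monoid T] [Zero N] {σ : T → N → N} (hσm : ∀ a b v, σ a (σ b v) = σ (a * b) v)
    (hσ0 : ∀ a, σ a 0 = 0) (h : T) (a : WithZero T) (v : N) :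
    σ h (wact σ a v) = wact σ (h * a) v := by
  induction a using WithZero.recZeroCoe with
  | zero => simp [hσ0]
  | coe t => simp [← WithZero.coe_mul, hσm]

theorem apply_finsuppSum_wact [Monoid T] [AddCommMonoid N] {I : Type} {σ : T → N → N}
    (hσm : ∀ a b v, σ a (σ b v) = σ (a * b) v) (hσd : ∀ a v w, σ a (v + w) = σ a v + σ a w)
    (hσ0 : ∀ a, σ a 0 = 0) (b : I → N) (h : T) (c : I →₀ WithZero T) :
    σ h (c.sum fun i a => wact σ a (b i)) =
      (c.mapRange ((h : WithZero T) * ·) (mul_zero _)).sum fun i a => wact σ a (b i) := by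
  let φ : N →+ N := { toFun := σ h, map_zero' := hσ0 h, map_add' := hσd h }
  rw [Finsupp.sum_mapRange_index fun i => wact_zero σ (b i)]
  exact (map_finsuppSum φ c _).trans (Finsupp.sum_congr fun i _ => apply_wact hσm hσ0 h _ _)

end WAct

theorem residue_free_general {T M I : Type} [Monoid T] [AddCommMonoid M]
    (σ : T → M → M)
    (hσ1 : ∀ v, σ 1 v = v)
    (hσm : ∀ a b v, σ a (σ b v) = σ (a * b) v)
    (hσd : ∀ a v w, σ a (v + w) = σ a v + σ a w)
    (hσ0 : ∀ a, σ a 0 = 0)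
    (G : Submonoid T)
    (hG : ∀ g ∈ G, ∃ g' ∈ G, g * g' = 1 ∧ g' * g = 1)
    (b : I → M)
    (hfree : ∀ x : M, ∃! c : I →₀ WithZero T, x = c.sum fun i a => wact σ a (b i)) :
    ∀ x : M,
      (∃ c : I →₀ WithZero T, ∃ g ∈ G, σ g (c.sum fun i a => wact σ a (b i)) = x) ∧
      (∀ c c' : I →₀ WithZero T,
        (∃ g ∈ G, σ g (c.sum fun i a => wact σ a (b i)) = x) →
        (∃ g ∈ G, σ g (c'.sum fun i a => wact σ a (b i)) = x) →
        c.support = c'.support ∧ ∀ i : I, ∃ g ∈ G, c' i = (g : T) * c i) := by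
  intro x
  refine ⟨?_, ?_⟩
  · obtain ⟨c, hc, -⟩ := hfree x
    exact ⟨c, 1, one_mem G, by rw [hσ1, hc]⟩
  rintro c c' ⟨g, hg, rfl⟩ ⟨g', hg', hg'x⟩
  obtain ⟨g'', hg'', -, hg''g'⟩ := hG g' hg'
  have hc' : c' = c.mapRange (((g'' * g : T) : WithZero T) * ·) (mul_zero _) := by
    obtain ⟨_, -, huniq⟩ := hfree (c'.sum fun i a => wact σ a (b i))
    refine (huniq c' rfl).trans (huniq _ ?_).symm
    calc (c'.sum fun i a => wact σ a (b i))
        = σ (g'' * g') (c'.sum fun i a => wact σ a (b i)) := by rw [hg''g', hσ1]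
      _ = σ (g'' * g) (c.sum fun i a => wact σ a (b i)) := by rw [← hσm, hg'x, hσm]
      _ = _ := apply_finsuppSum_wact hσm hσd hσ0 b _ c
  subst hc'
  refine ⟨?_, fun i => ⟨g'' * g, mul_mem hg'' hg, rfl⟩⟩
  ext i
  simp

/-- Let `M` be a free `T`-module over a monoid `T` with base `b : I → M`
(every element of `M` is uniquely `∑ aᵢ bᵢ` with coefficients `aᵢ ∈ T ∪ {𝟘}`), and let
`G ≤ T` be a subgroup whose orbits on the base elements are distinct.  Then the residue
hypermodule `M/G` is free over `T/G` with base `{bᵢG}`: every `G`-orbit in `M` contains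
a sum `∑ aᵢ bᵢ`, and the cosets `aᵢG` of the coefficients (hence the nonzero support)
are uniquely determined. -/
theorem residue_free {T M I : Type} [Monoid T] [AddCommMonoid M]
    (σ : T → M → M)
    (hσ1 : ∀ v, σ 1 v = v)
    (hσm : ∀ a b v, σ a (σ b v) = σ (a * b) v)
    (hσd : ∀ a v w, σ a (v + w) = σ a v + σ a w)
    (hσ0 : ∀ a, σ a 0 = 0)
    (G : Submonoid T)
    (hG : ∀ g ∈ G, ∃ g' ∈ G, g * g' = 1 ∧ g' * g = 1)
    (b : I → M)
    (hfree : ∀ x : M, ∃! c : I →₀ WithZero T, x = c.sum fun i a => wact σ a (b i))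
    (hbase : ∀ i j : I, (∃ g ∈ G, σ g (b i) = b j) → i = j) :
    ∀ x : M,
      (∃ c : I →₀ WithZero T, ∃ g ∈ G, σ g (c.sum fun i a => wact σ a (b i)) = x) ∧
      (∀ c c' : I →₀ WithZero T,
        (∃ g ∈ G, σ g (c.sum fun i a => wact σ a (b i)) = x) →
        (∃ g ∈ G, σ g (c'.sum fun i a => wact σ a (b i)) = x) →
        c.support = c'.support ∧ ∀ i : I, ∃ g ∈ G, c' i = (g : T) * c i) :=
  residue_free_general σ hσ1 hσm hσd hσ0 G hG b hfree
end

section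
/- Let M₁, M₂, M₃ be module pairs over monoids as appropriate. Then there is a bijection between WMor(M₁ × M₂, M₃), the set of 𝒯₁,𝒯₂-multiplicative maps f: M₁ × M₂ → M₃ such that whenever ∑ⱼ b_{1,j} ∈ (M₁)₀ or ∑ⱼ b_{2,j} ∈ (M₂)₀ the corresponding values f(∑ⱼ b_{1,j}, b₂) resp. f(b₁, ∑ⱼ b_{2,j}) lie in (M₃)₀, and WMor(M₂, WMor(M₁, M₃)), the set of weak morphisms from M₂ into the weak-morphism pair WMor(M₁, M₃); the bijection sends f to the map w ↦ f_w where f_w(v) = f(v, w), and its inverse sends g to (v,w) ↦ g(w)(v). -/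
/-- The set `WMor(M₁ × M₂, M₃)` of `(T₁,T₂)`-multiplicative maps `f : M₁ × M₂ → M₃`
which are weak in each variable: whenever a finite sum `∑ⱼ b_{1,j}` lies in `Z₁`
(the zero-set of `M₁`), the sum `∑ⱼ f(b_{1,j}, b₂)` lies in `Z₃`, and symmetrically. -/
def WMorProd {T₁ T₂ M₁ M₂ M₃ : Type} [AddCommMonoid M₁] [AddCommMonoid M₂]
    [AddCommMonoid M₃]
    (l₁ : T₁ → M₁ → M₁) (l₂ : T₂ → M₂ → M₂) (l₃ : T₁ → M₃ → M₃) (r₃ : M₃ → T₂ → M₃)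
    (Z₁ : Set M₁) (Z₂ : Set M₂) (Z₃ : Set M₃) : Set (M₁ → M₂ → M₃) :=
  {f | (∀ (a : T₁) (v : M₁) (w : M₂), f (l₁ a v) w = l₃ a (f v w)) ∧
       (∀ (v : M₁) (a : T₂) (w : M₂), f v (l₂ a w) = r₃ (f v w) a) ∧
       (∀ (l : List M₁) (w : M₂), l.sum ∈ Z₁ → (l.map (fun v => f v w)).sum ∈ Z₃) ∧
       (∀ (v : M₁) (l : List M₂), l.sum ∈ Z₂ → (l.map (fun w => f v w)).sum ∈ Z₃)}

/-- The set `WMor(M₂, WMor(M₁, M₃))` of weak morphisms from `M₂` into the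
weak-morphism pair `WMor(M₁, M₃)` (pointwise addition; zero-set the morphisms with
image in `Z₃`): each value `g w` is a weak morphism `M₁ → M₃`, `g` is multiplicative
for the `T₂`-actions, and `g` sends sums in `Z₂` to sums in the zero-set. -/
def WMorCurry {T₁ T₂ M₁ M₂ M₃ : Type} [AddCommMonoid M₁] [AddCommMonoid M₂]
    [AddCommMonoid M₃]
    (l₁ : T₁ → M₁ → M₁) (l₂ : T₂ → M₂ → M₂) (l₃ : T₁ → M₃ → M₃) (r₃ : M₃ → T₂ → M₃)
    (Z₁ : Set M₁) (Z₂ : Set M₂) (Z₃ : Set M₃) : Set (M₂ → M₁ → M₃) :=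
  {g | (∀ (w : M₂) (a : T₁) (v : M₁), g w (l₁ a v) = l₃ a (g w v)) ∧
       (∀ (w : M₂) (l : List M₁), l.sum ∈ Z₁ → (l.map (g w)).sum ∈ Z₃) ∧
       (∀ (a : T₂) (w : M₂) (v : M₁), g (l₂ a w) v = r₃ (g w v) a) ∧
       (∀ (l : List M₂) (v : M₁), l.sum ∈ Z₂ → (l.map (fun w => g w v)).sum ∈ Z₃)}

/-- There is a bijection between `WMor(M₁ × M₂, M₃)` and
`WMor(M₂, WMor(M₁, M₃))`, sending `f` to `w ↦ (v ↦ f v w)`, with inverse sending `g`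
to `(v, w) ↦ g w v`. -/
theorem wmor_adjoint_bijection {T₁ T₂ M₁ M₂ M₃ : Type} [AddCommMonoid M₁]
    [AddCommMonoid M₂] [AddCommMonoid M₃]
    (l₁ : T₁ → M₁ → M₁) (l₂ : T₂ → M₂ → M₂) (l₃ : T₁ → M₃ → M₃) (r₃ : M₃ → T₂ → M₃)
    (Z₁ : Set M₁) (Z₂ : Set M₂) (Z₃ : Set M₃)
    (hZ₁ : ∀ x ∈ Z₁, ∀ y ∈ Z₁, x + y ∈ Z₁) (hZ₃ : ∀ x ∈ Z₃, ∀ y ∈ Z₃, x + y ∈ Z₃) :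
    ∃ Φ : (M₁ → M₂ → M₃) → (M₂ → M₁ → M₃),
      (∀ f w v, Φ f w v = f v w) ∧
      Set.BijOn Φ (WMorProd l₁ l₂ l₃ r₃ Z₁ Z₂ Z₃) (WMorCurry l₁ l₂ l₃ r₃ Z₁ Z₂ Z₃) := by
  refine ⟨fun f w v => f v w, fun _ _ _ => rfl, ?_, ?_, ?_⟩
  · rintro f ⟨h1, h2, h3, h4⟩
    exact ⟨fun w a v => h1 a v w, fun w l hl => h3 l w hl,
      fun a w v => h2 v a w, fun l v hl => h4 v l hl⟩
  · intro f hf g hg h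
    funext v w
    exact congrFun (congrFun h w) v
  · rintro g ⟨h1, h2, h3, h4⟩
    exact ⟨fun v w => g w v,
      ⟨fun a v w => h1 w a v, fun v a w => h3 a w v,
       fun l w hl => h2 w l hl, fun v l hl => h4 l v hl⟩, rfl⟩
end
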